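/- arXiv:1707.05298 — 9 statements merged into one kernel-verified Lean document; each statement's English description precedes it below -/
import Mathlib

section
/- With the hitting-times setup below, the limit lim_{i→∞} [(t_{2i+1} − t_{2i}) − γ₂·(t_{2i} − t_{2i−1})] exists and equals −(1/E₁)·log a. (Lemma 6.1(1): the sojourn time near the first saddle-focus is asymptotically γ₂ times the previous sojourn time near the second one, up to the constant −(1/E₁)·log a.) -/
/-!
Each passage multiplies the coordinates by a power up to a relatively small error:
`ρ_i ≈ (a z_i)^δ₁` and `z_{i+1} ≈ ρ_i^δ₂` with relative errors `O((a z_i)^{δ₁ ε})` and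
`O(ρ_i^{δ₂ ε})`, both tending to `0`. Taking logarithms, `log z_{i+1} - δ₂ log ρ_i → 0`, while
the hitting-time differences are `-(1/E₁) (log a + log z_{i+1})` and `-(1/E₂) log ρ_i`; since
`γ₂ / E₂ = δ₂ / E₁`, the combination in question is `-(1/E₁) log a` plus `-(1/E₁)` times a null
sequence.
-/

open Real Filter Topology

section PowerAsymptotics

variable {ι : Type*} {l : Filter ι} {f g : ι → ℝ} {p ε M : ℝ}

theorem tendsto_div_rpow_of_abs_sub_rpow_le (hp : 0 < p) (hε : 0 < ε)
    (hg : ∀ i, 0 < g i) (hg0 : Tendsto g l (𝓝 0))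
    (hfg : ∀ i, |f i - g i ^ p| ≤ M * g i ^ (p * (1 + ε))) :
    Tendsto (fun i => f i / g i ^ p) l (𝓝 1) := by
  have herr : Tendsto (fun i => M * g i ^ (p * ε)) l (𝓝 0) := by
    simpa [zero_rpow (mul_pos hp hε).ne'] using
      (hg0.rpow_const (Or.inr (mul_pos hp hε).le)).const_mul M
  have hsub : Tendsto (fun i => f i / g i ^ p - 1) l (𝓝 0) := by
    refine squeeze_zero_norm (fun i => ?_) herr
    have hgp : 0 < g i ^ p := rpow_pos_of_pos (hg i) p
    rw [div_sub_one hgp.ne', norm_div, Real.norm_eq_abs, Real.norm_eq_abs, abs_of_pos hgp, div_le_iff₀ hgp]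
    calc |f i - g i ^ p| ≤ M * g i ^ (p * (1 + ε)) := hfg i
      _ = M * g i ^ (p * ε) * g i ^ p := by
        rw [mul_assoc, ← rpow_add (hg i)]; ring_nf
  simpa using hsub.add_const 1

theorem tendsto_zero_of_abs_sub_rpow_le (hp : 0 < p) (hε : 0 < ε)
    (hg : ∀ i, 0 < g i) (hg0 : Tendsto g l (𝓝 0))
    (hfg : ∀ i, |f i - g i ^ p| ≤ M * g i ^ (p * (1 + ε))) :
    Tendsto f l (𝓝 0) := by
  have hgp : Tendsto (fun i => g i ^ p) l (𝓝 0) := by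
    simpa [zero_rpow hp.ne'] using hg0.rpow_const (Or.inr hp.le)
  have hprod := (tendsto_div_rpow_of_abs_sub_rpow_le hp hε hg hg0 hfg).mul hgp
  refine (tendsto_congr fun i => ?_).mp (by simpa using hprod)
  exact div_mul_cancel₀ (f i) (rpow_pos_of_pos (hg i) p).ne'

theorem tendsto_log_sub_mul_log_of_abs_sub_rpow_le (hp : 0 < p) (hε : 0 < ε)
    (hf : ∀ i, 0 < f i) (hg : ∀ i, 0 < g i) (hg0 : Tendsto g l (𝓝 0))
    (hfg : ∀ i, |f i - g i ^ p| ≤ M * g i ^ (p * (1 + ε))) :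
    Tendsto (fun i => log (f i) - p * log (g i)) l (𝓝 0) := by
  have hlog := (continuousAt_log one_ne_zero).tendsto.comp
    (tendsto_div_rpow_of_abs_sub_rpow_le hp hε hg hg0 hfg)
  rw [log_one] at hlog
  refine (tendsto_congr fun i => ?_).mp hlog
  rw [Function.comp_apply, log_div (hf i).ne' (rpow_pos_of_pos (hg i) p).ne', log_rpow (hg i)]

end PowerAsymptotics

theorem stmt_0_general
    (C₁ E₁ C₂ E₂ a ε M : ℝ)
    (hC₁ : C₁ > E₁) (hE₁ : E₁ > 0) (hC₂ : C₂ > E₂) (hE₂ : E₂ > 0)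
    (ha : a ∈ Set.Ioo (0:ℝ) 1) (hε : ε ∈ Set.Ioo (0:ℝ) 1)
    (z ρ S U t : ℕ → ℝ)
    (hz01 : ∀ i, z i ∈ Set.Ioo (0:ℝ) 1) (hρ01 : ∀ i, ρ i ∈ Set.Ioo (0:ℝ) 1)
    (hzlim : Tendsto z atTop (𝓝 0))
    (hρdef : ∀ i, ρ i = (a * z i) ^ (C₁/E₁) + S i)
    (hS : ∀ i, |S i| ≤ M * (a * z i) ^ ((C₁/E₁) * (1+ε)))
    (hzdef : ∀ i, z (i+1) = (ρ i) ^ (C₂/E₂) + U i)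
    (hU : ∀ i, |U i| ≤ M * (ρ i) ^ ((C₂/E₂) * (1+ε)))
    (htodd : ∀ i, t (2*i+1) - t (2*i) = -(1/E₁) * Real.log (a * z i))
    (hteven : ∀ i, t (2*i+2) - t (2*i+1) = -(1/E₂) * Real.log (ρ i)) :
    Tendsto (fun i => (t (2*i+1) - t (2*i)) - (C₂/E₁) * (t (2*i) - t (2*i-1)))
      atTop (𝓝 (-(1/E₁) * Real.log a)) := by
  have hδ₁ : 0 < C₁ / E₁ := div_pos (hE₁.trans hC₁) hE₁
  have hδ₂ : 0 < C₂ / E₂ := div_pos (hE₂.trans hC₂) hE₂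
  have haz : ∀ i, 0 < a * z i := fun i => mul_pos ha.1 (hz01 i).1
  have hρlim : Tendsto ρ atTop (𝓝 0) :=
    tendsto_zero_of_abs_sub_rpow_le hδ₁ hε.1 haz (by simpa using hzlim.const_mul a)
      fun i => by rw [hρdef i, add_sub_cancel_left]; exact hS i
  have hlog : Tendsto (fun i => log (z (i+1)) - C₂ / E₂ * log (ρ i)) atTop (𝓝 0) :=
    tendsto_log_sub_mul_log_of_abs_sub_rpow_le hδ₂ hε.1 (fun i => (hz01 (i+1)).1)
      (fun i => (hρ01 i).1) hρlim fun i => by rw [hzdef i, add_sub_cancel_left]; exact hU i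
  have htime : ∀ i, (t (2*(i+1)+1) - t (2*(i+1))) - C₂ / E₁ * (t (2*(i+1)) - t (2*(i+1)-1))
      = -(1/E₁) * log a - 1/E₁ * (log (z (i+1)) - C₂ / E₂ * log (ρ i)) := by
    intro i
    rw [show 2*(i+1)-1 = 2*i+1 by omega, htodd, show 2*(i+1) = 2*i+2 by ring, hteven,
      log_mul ha.1.ne' (hz01 (i+1)).1.ne']
    field_simp
    ring
  -- Shift the index so that `2*i-1` never truncates (at `i = 0` it would read `t 0`).
  rw [← tendsto_add_atTop_iff_nat 1]
  simp only [htime]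
  simpa using (hlog.const_mul (1/E₁)).const_sub (-(1/E₁) * log a)

/-- Hitting-times setup for an orbit in the basin of a Bykov attractor:
`z i` and `ρ i` are the height and radial coordinates of the successive hits
at the cross sections, and `t` is the sequence of hitting times. -/
theorem stmt_0
    (C₁ E₁ C₂ E₂ a ε M : ℝ)
    (hC₁ : C₁ > E₁) (hE₁ : E₁ > 0) (hC₂ : C₂ > E₂) (hE₂ : E₂ > 0)
    (ha : a ∈ Set.Ioo (0:ℝ) 1) (hε : ε ∈ Set.Ioo (0:ℝ) 1) (hM : M > 0)
    (z ρ S U t : ℕ → ℝ)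
    (hz01 : ∀ i, z i ∈ Set.Ioo (0:ℝ) 1) (hρ01 : ∀ i, ρ i ∈ Set.Ioo (0:ℝ) 1)
    (hzlim : Tendsto z atTop (𝓝 0))
    (hρdef : ∀ i, ρ i = (a * z i) ^ (C₁/E₁) + S i)
    (hS : ∀ i, |S i| ≤ M * (a * z i) ^ ((C₁/E₁) * (1+ε)))
    (hzdef : ∀ i, z (i+1) = (ρ i) ^ (C₂/E₂) + U i)
    (hU : ∀ i, |U i| ≤ M * (ρ i) ^ ((C₂/E₂) * (1+ε)))
    (ht0 : t 0 = 0)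
    (htodd : ∀ i, t (2*i+1) - t (2*i) = -(1/E₁) * Real.log (a * z i))
    (hteven : ∀ i, t (2*i+2) - t (2*i+1) = -(1/E₂) * Real.log (ρ i)) :
    Tendsto (fun i => (t (2*i+1) - t (2*i)) - (C₂/E₁) * (t (2*i) - t (2*i-1)))
      atTop (𝓝 (-(1/E₁) * Real.log a)) :=
  stmt_0_general C₁ E₁ C₂ E₂ a ε M hC₁ hE₁ hC₂ hE₂ ha hε z ρ S U t hz01 hρ01 hzlim hρdef hS hzdef hU
    htodd hteven
end

section
/- With the hitting-times setup below, the limit lim_{i→∞} [(t_{2i+2} − t_{2i+1}) − γ₁·(t_{2i+1} − t_{2i})] exists and equals 0. (Lemma 6.1(2).) -/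
open Real Filter Topology

/-! Writing `δ₁ = C₁/E₁`, the quantity in question is `-(1/E₂) · log (ρ_i / (a z_i)^δ₁)`, and the
relative error `S_i / (a z_i)^δ₁` is at most `M (a z_i)^(δ₁ ε) → 0`, so the ratio tends to `1`. -/

theorem Filter.Tendsto.div_nhds_one_of_abs_sub_le_mul {α : Type*} {l : Filter α}
    {r y w : α → ℝ} {M : ℝ} (hy : ∀ i, 0 < y i) (hw : Tendsto w l (𝓝 0))
    (h : ∀ i, |r i - y i| ≤ M * w i * y i) :
    Tendsto (fun i => r i / y i) l (𝓝 1) := by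
  have hbound : ∀ i, ‖r i / y i - 1‖ ≤ M * w i := fun i => by
    rw [Real.norm_eq_abs, div_sub_one (hy i).ne', abs_div, abs_of_pos (hy i),
      div_le_iff₀ (hy i)]
    exact h i
  have hMw : Tendsto (fun i => M * w i) l (𝓝 0) := by simpa using hw.const_mul M
  simpa using (squeeze_zero_norm hbound hMw).add_const 1

theorem abs_sub_rpow_le_mul_rpow_mul_rpow {x p ε M s : ℝ} (hx : 0 < x)
    (hs : |s| ≤ M * x ^ (p * (1 + ε))) :
    |(x ^ p + s) - x ^ p| ≤ M * x ^ (p * ε) * x ^ p := by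
  rwa [add_sub_cancel_left, mul_assoc, ← Real.rpow_add hx, ← mul_add_one, add_comm ε 1]

theorem neg_one_div_mul_log_sub_eq_log_div_rpow {E₁ E₂ C₁ x r : ℝ} (hx : 0 < x) (hr : r ≠ 0) :
    -(1/E₂) * log r - (C₁/E₂) * (-(1/E₁) * log x) = -(1/E₂) * log (r / x ^ (C₁/E₁)) := by
  rw [log_div hr (rpow_pos_of_pos hx _).ne', log_rpow hx]
  ring

theorem stmt_1_general
    (C₁ E₁ E₂ a ε M : ℝ)
    (hC₁ : C₁ > E₁) (hE₁ : E₁ > 0)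
    (ha : a ∈ Set.Ioo (0:ℝ) 1) (hε : ε ∈ Set.Ioo (0:ℝ) 1)
    (z ρ S t : ℕ → ℝ)
    (hz01 : ∀ i, z i ∈ Set.Ioo (0:ℝ) 1) (hρ01 : ∀ i, ρ i ∈ Set.Ioo (0:ℝ) 1)
    (hzlim : Tendsto z atTop (𝓝 0))
    (hρdef : ∀ i, ρ i = (a * z i) ^ (C₁/E₁) + S i)
    (hS : ∀ i, |S i| ≤ M * (a * z i) ^ ((C₁/E₁) * (1+ε)))
    (htodd : ∀ i, t (2*i+1) - t (2*i) = -(1/E₁) * Real.log (a * z i))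
    (hteven : ∀ i, t (2*i+2) - t (2*i+1) = -(1/E₂) * Real.log (ρ i)) :
    Tendsto (fun i => (t (2*i+2) - t (2*i+1)) - (C₁/E₂) * (t (2*i+1) - t (2*i)))
      atTop (𝓝 0) := by
  have haz : ∀ i, 0 < a * z i := fun i => mul_pos ha.1 (hz01 i).1
  have hδε : 0 < C₁ / E₁ * ε := mul_pos (div_pos (hE₁.trans hC₁) hE₁) hε.1
  have hsmall : Tendsto (fun i => (a * z i) ^ (C₁ / E₁ * ε)) atTop (𝓝 0) := by
    simpa [zero_rpow hδε.ne'] using (hzlim.const_mul a).rpow_const (Or.inr hδε.le)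
  have hratio : Tendsto (fun i => ρ i / (a * z i) ^ (C₁/E₁)) atTop (𝓝 1) :=
    Tendsto.div_nhds_one_of_abs_sub_le_mul (fun i => rpow_pos_of_pos (haz i) _) hsmall
      fun i => hρdef i ▸ abs_sub_rpow_le_mul_rpow_mul_rpow (haz i) (hS i)
  have hlog := (hratio.log one_ne_zero).const_mul (-(1/E₂))
  rw [log_one, mul_zero] at hlog
  refine hlog.congr fun i => ?_
  rw [hteven, htodd, neg_one_div_mul_log_sub_eq_log_div_rpow (haz i) (hρ01 i).1.ne']

/-- Hitting-times setup for an orbit in the basin of a Bykov attractor: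
`z i` and `ρ i` are the height and radial coordinates of the successive hits
at the cross sections, and `t` is the sequence of hitting times. -/
theorem stmt_1
    (C₁ E₁ C₂ E₂ a ε M : ℝ)
    (hC₁ : C₁ > E₁) (hE₁ : E₁ > 0) (hC₂ : C₂ > E₂) (hE₂ : E₂ > 0)
    (ha : a ∈ Set.Ioo (0:ℝ) 1) (hε : ε ∈ Set.Ioo (0:ℝ) 1) (hM : M > 0)
    (z ρ S U t : ℕ → ℝ)
    (hz01 : ∀ i, z i ∈ Set.Ioo (0:ℝ) 1) (hρ01 : ∀ i, ρ i ∈ Set.Ioo (0:ℝ) 1)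
    (hzlim : Tendsto z atTop (𝓝 0))
    (hρdef : ∀ i, ρ i = (a * z i) ^ (C₁/E₁) + S i)
    (hS : ∀ i, |S i| ≤ M * (a * z i) ^ ((C₁/E₁) * (1+ε)))
    (hzdef : ∀ i, z (i+1) = (ρ i) ^ (C₂/E₂) + U i)
    (hU : ∀ i, |U i| ≤ M * (ρ i) ^ ((C₂/E₂) * (1+ε)))
    (ht0 : t 0 = 0)
    (htodd : ∀ i, t (2*i+1) - t (2*i) = -(1/E₁) * Real.log (a * z i))
    (hteven : ∀ i, t (2*i+2) - t (2*i+1) = -(1/E₂) * Real.log (ρ i)) :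
    Tendsto (fun i => (t (2*i+2) - t (2*i+1)) - (C₁/E₂) * (t (2*i+1) - t (2*i)))
      atTop (𝓝 0) :=
  stmt_1_general C₁ E₁ E₂ a ε M hC₁ hE₁ ha hε z ρ S t hz01 hρ01 hzlim hρdef hS htodd hteven
end

section
/- With the hitting-times setup below, the limit lim_{i→∞} [(t_{2i+2} − t_{2i}) − δ·(t_{2i} − t_{2i−2})] exists and equals −τ·log a. (Lemma 6.1(3): consecutive full return times satisfy an asymptotic affine recursion with slope δ = γ₁γ₂ and constant term −τ·log a.) -/
/-!
Write `Lᵢ = log (a zᵢ)` and `Rᵢ = log ρᵢ`. A perturbation of relative size `p ^ (c ε)` of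
`p ^ c` changes `log (p ^ c)` only by `o(1)`, so `Rᵢ = δ₁ Lᵢ + o(1)` and
`log z_{i+1} = δ₂ Rᵢ + o(1)`. The full return time is `Tᵢ = -(Lᵢ / E₁ + Rᵢ / E₂)`.
Eliminating `L_{i+1} = log a + log z_{i+1}` and `Lᵢ` through these relations shows that
`T_{i+1} - δ Tᵢ` is `-τ log a` plus a linear combination of the `o(1)` errors.
-/

open Real Filter Topology

section PerturbedRpow

variable {α : Type*} {l : Filter α} {p q V : α → ℝ} {c ε M : ℝ}

lemma tendsto_div_rpow_of_abs_le_rpow (hc : 0 < c) (hε : 0 < ε) (hp : ∀ x, 0 < p x)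
    (hp0 : Tendsto p l (𝓝 0)) (hV : ∀ x, |V x| ≤ M * p x ^ (c * (1 + ε))) :
    Tendsto (fun x => V x / p x ^ c) l (𝓝 0) := by
  have hbound : Tendsto (fun x => M * p x ^ (c * ε)) l (𝓝 0) := by
    simpa [zero_rpow (mul_pos hc hε).ne'] using
      (hp0.rpow_const (Or.inr (mul_pos hc hε).le)).const_mul M
  refine squeeze_zero_norm (fun x => ?_) hbound
  have hpc : 0 < p x ^ c := rpow_pos_of_pos (hp x) c
  rw [norm_eq_abs, abs_div, abs_of_pos hpc, div_le_iff₀ hpc, mul_assoc, ← rpow_add (hp x),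
    show c * ε + c = c * (1 + ε) by ring]
  exact hV x

lemma tendsto_of_perturbed_rpow (hc : 0 < c) (hε : 0 < ε) (hp : ∀ x, 0 < p x)
    (hp0 : Tendsto p l (𝓝 0)) (hqV : ∀ x, q x = p x ^ c + V x)
    (hV : ∀ x, |V x| ≤ M * p x ^ (c * (1 + ε))) :
    Tendsto q l (𝓝 0) := by
  have hpc : Tendsto (fun x => p x ^ c) l (𝓝 0) := by
    simpa [zero_rpow hc.ne'] using hp0.rpow_const (Or.inr hc.le)
  have hprod := hpc.mul (tendsto_div_rpow_of_abs_le_rpow hc hε hp hp0 hV)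
  rw [zero_mul] at hprod
  have hV0 : Tendsto V l (𝓝 0) :=
    hprod.congr fun x => mul_div_cancel₀ _ (rpow_pos_of_pos (hp x) c).ne'
  simpa [← hqV] using hpc.add hV0

lemma tendsto_log_sub_mul_log_of_perturbed_rpow (hc : 0 < c) (hε : 0 < ε)
    (hp : ∀ x, 0 < p x) (hq : ∀ x, 0 < q x) (hp0 : Tendsto p l (𝓝 0))
    (hqV : ∀ x, q x = p x ^ c + V x) (hV : ∀ x, |V x| ≤ M * p x ^ (c * (1 + ε))) :
    Tendsto (fun x => log (q x) - c * log (p x)) l (𝓝 0) := by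
  have hratio : Tendsto (fun x => 1 + V x / p x ^ c) l (𝓝 1) := by
    simpa using tendsto_const_nhds.add (tendsto_div_rpow_of_abs_le_rpow hc hε hp hp0 hV)
  have hlog := (continuousAt_log one_ne_zero).tendsto.comp hratio
  rw [log_one] at hlog
  refine hlog.congr fun x => ?_
  have hpc : 0 < p x ^ c := rpow_pos_of_pos (hp x) c
  rw [Function.comp_apply, ← log_rpow (hp x), ← log_div (hq x).ne' hpc.ne', hqV x, add_div,
    div_self hpc.ne']

end PerturbedRpow

theorem stmt_2_general
    (C₁ E₁ C₂ E₂ a ε M : ℝ)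
    (hC₁ : C₁ > E₁) (hE₁ : E₁ > 0) (hC₂ : C₂ > E₂) (hE₂ : E₂ > 0)
    (ha : a ∈ Set.Ioo (0:ℝ) 1) (hε : ε ∈ Set.Ioo (0:ℝ) 1)
    (z ρ S U t : ℕ → ℝ)
    (hz01 : ∀ i, z i ∈ Set.Ioo (0:ℝ) 1) (hρ01 : ∀ i, ρ i ∈ Set.Ioo (0:ℝ) 1)
    (hzlim : Tendsto z atTop (𝓝 0))
    (hρdef : ∀ i, ρ i = (a * z i) ^ (C₁/E₁) + S i)
    (hS : ∀ i, |S i| ≤ M * (a * z i) ^ ((C₁/E₁) * (1+ε)))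
    (hzdef : ∀ i, z (i+1) = (ρ i) ^ (C₂/E₂) + U i)
    (hU : ∀ i, |U i| ≤ M * (ρ i) ^ ((C₂/E₂) * (1+ε)))
    (htodd : ∀ i, t (2*i+1) - t (2*i) = -(1/E₁) * Real.log (a * z i))
    (hteven : ∀ i, t (2*i+2) - t (2*i+1) = -(1/E₂) * Real.log (ρ i)) :
    Tendsto (fun i => (t (2*i+2) - t (2*i)) - ((C₁/E₁) * (C₂/E₂)) * (t (2*i) - t (2*i-2)))
      atTop (𝓝 (-((1 + C₁/E₂)/E₁ * Real.log a))) := by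
  have hδ₁ : 0 < C₁ / E₁ := div_pos (hE₁.trans hC₁) hE₁
  have hδ₂ : 0 < C₂ / E₂ := div_pos (hE₂.trans hC₂) hE₂
  have haz : ∀ i, 0 < a * z i := fun i => mul_pos ha.1 (hz01 i).1
  have haz0 : Tendsto (fun i => a * z i) atTop (𝓝 0) := by simpa using hzlim.const_mul a
  have hρ : ∀ i, 0 < ρ i := fun i => (hρ01 i).1
  have he := tendsto_log_sub_mul_log_of_perturbed_rpow hδ₁ hε.1 haz hρ haz0 hρdef hS
  have hf := tendsto_log_sub_mul_log_of_perturbed_rpow hδ₂ hε.1 hρ (fun i => (hz01 (i + 1)).1)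
    (tendsto_of_perturbed_rpow hδ₁ hε.1 haz haz0 hρdef hS) hzdef hU
  set e := fun i => log (ρ i) - C₁ / E₁ * log (a * z i)
  set f := fun i => log (z (i + 1)) - C₂ / E₂ * log (ρ i)
  have hreturn : ∀ i, t (2 * i + 2) - t (2 * i) = -(log (a * z i) / E₁ + log (ρ i) / E₂) :=
    fun i => by linear_combination htodd i + hteven i
  have hstep : ∀ j, t (2 * (j + 1) + 2) - t (2 * (j + 1))
      - C₁ / E₁ * (C₂ / E₂) * (t (2 * (j + 1)) - t (2 * (j + 1) - 2))
      = -((1 + C₁ / E₂) / E₁ * log a)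
        - ((1 + C₁ / E₂) / E₁ * f j + e (j + 1) / E₂ + C₂ / E₂ / E₁ * e j) := by
    intro j
    rw [show 2 * (j + 1) - 2 = 2 * j by omega, hreturn (j + 1),
      show 2 * (j + 1) = 2 * j + 2 by ring, hreturn j]
    simp only [e, f]
    rw [log_mul ha.1.ne' (hz01 (j + 1)).1.ne']
    field_simp
    ring
  have herr : Tendsto (fun j => (1 + C₁ / E₂) / E₁ * f j + e (j + 1) / E₂ + C₂ / E₂ / E₁ * e j)
      atTop (𝓝 0) := by
    simpa using ((hf.const_mul _).add (((tendsto_add_atTop_iff_nat 1).mpr he).div_const E₂)).add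
      (he.const_mul _)
  rw [← tendsto_add_atTop_iff_nat 1]
  simp only [hstep]
  simpa using tendsto_const_nhds.sub herr

/-- Hitting-times setup for an orbit in the basin of a Bykov attractor:
`z i` and `ρ i` are the height and radial coordinates of the successive hits
at the cross sections, and `t` is the sequence of hitting times. -/
theorem stmt_2
    (C₁ E₁ C₂ E₂ a ε M : ℝ)
    (hC₁ : C₁ > E₁) (hE₁ : E₁ > 0) (hC₂ : C₂ > E₂) (hE₂ : E₂ > 0)
    (ha : a ∈ Set.Ioo (0:ℝ) 1) (hε : ε ∈ Set.Ioo (0:ℝ) 1) (hM : M > 0)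
    (z ρ S U t : ℕ → ℝ)
    (hz01 : ∀ i, z i ∈ Set.Ioo (0:ℝ) 1) (hρ01 : ∀ i, ρ i ∈ Set.Ioo (0:ℝ) 1)
    (hzlim : Tendsto z atTop (𝓝 0))
    (hρdef : ∀ i, ρ i = (a * z i) ^ (C₁/E₁) + S i)
    (hS : ∀ i, |S i| ≤ M * (a * z i) ^ ((C₁/E₁) * (1+ε)))
    (hzdef : ∀ i, z (i+1) = (ρ i) ^ (C₂/E₂) + U i)
    (hU : ∀ i, |U i| ≤ M * (ρ i) ^ ((C₂/E₂) * (1+ε)))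
    (ht0 : t 0 = 0)
    (htodd : ∀ i, t (2*i+1) - t (2*i) = -(1/E₁) * Real.log (a * z i))
    (hteven : ∀ i, t (2*i+2) - t (2*i+1) = -(1/E₂) * Real.log (ρ i)) :
    Tendsto (fun i => (t (2*i+2) - t (2*i)) - ((C₁/E₁) * (C₂/E₂)) * (t (2*i) - t (2*i-2)))
      atTop (𝓝 (-((1 + C₁/E₂)/E₁ * Real.log a))) :=
  stmt_2_general C₁ E₁ C₂ E₂ a ε M hC₁ hE₁ hC₂ hE₂ ha hε z ρ S U t hz01 hρ01 hzlim hρdef hS hzdef hU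
    htodd hteven
end

section
/- With the hitting-times setup below, define for each i ≥ 1 the remainder R_i := (t_{2i+2} − t_{2i}) − δ·(t_{2i} − t_{2i−2}) + τ·log a. Then the series ∑_{i=1}^∞ i·|R_i| converges. (Lemma 6.1(4).) -/
open Real Filter Topology

/-!
Write `xᵢ = a zᵢ`. The hypotheses say that `log ρᵢ = δ₁ log xᵢ + eᵢ` and
`log zᵢ₊₁ = δ₂ log ρᵢ + fᵢ` with `|eᵢ|, |fᵢ| ≤ 2M xᵢ^ε` once `xᵢ` is small, and that then
`zᵢ₊₁ ≤ xᵢ / 4`, so `xᵢ^ε` decays geometrically. Expanding the hitting times, the `log xᵢ` terms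
cancel exactly (this is what the constants `δ` and `τ log a` are chosen for), leaving
`Rᵢ₊₁ = -(δ₂/E₁) eᵢ - τ fᵢ - eᵢ₊₁/E₂`, which is then geometrically small.
-/

lemma abs_log_le_two_mul_abs_sub_one {y : ℝ} (hy : 1 / 2 ≤ y) : |log y| ≤ 2 * |y - 1| := by
  have hy₀ : 0 < y := by linarith
  rcases le_total 1 y with h | h
  · rw [abs_of_nonneg (log_nonneg h), abs_of_nonneg (by linarith)]
    linarith [log_le_sub_one_of_pos hy₀]
  · rw [abs_of_nonpos (log_nonpos hy₀.le h), abs_of_nonpos (by linarith)]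
    have hinv : 1 - y⁻¹ ≤ log y := one_sub_inv_le_log_of_pos hy₀
    have : y⁻¹ - 1 ≤ 2 * (1 - y) := by
      rw [inv_eq_one_div, div_sub_one hy₀.ne', div_le_iff₀ hy₀]
      nlinarith
    linarith

lemma abs_log_sub_log_le {r y η : ℝ} (hy : 0 < y) (hη : η ≤ 1 / 2) (h : |r - y| ≤ η * y) :
    0 < r ∧ |log r - log y| ≤ 2 * η := by
  have hq : |r / y - 1| ≤ η := by
    rwa [div_sub_one hy.ne', abs_div, abs_of_pos hy, div_le_iff₀ hy]
  have hq_half : 1 / 2 ≤ r / y := by linarith [(abs_le.mp hq).1]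
  have hr : 0 < r := by
    have := mul_le_mul_of_nonneg_right hq_half hy.le
    rw [div_mul_cancel₀ _ hy.ne'] at this
    linarith
  refine ⟨hr, ?_⟩
  rw [← log_div hr.ne' hy.ne']
  linarith [abs_log_le_two_mul_abs_sub_one hq_half]

/-- `u` is small enough that `u ^ d` has relative error at most `1/2` and `u ^ d ≤ u / 3`. -/
def SmallForPower (M ε d u : ℝ) : Prop :=
  M * u ^ (d * ε) ≤ 1 / 2 ∧ u ^ (d - 1) ≤ 1 / 3

lemma SmallForPower.mono {M ε d u v : ℝ} (hd : 1 < d) (hε : 0 ≤ ε) (hM : 0 ≤ M) (hv : 0 ≤ v)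
    (hvu : v ≤ u) (h : SmallForPower M ε d u) : SmallForPower M ε d v :=
  ⟨(mul_le_mul_of_nonneg_left (rpow_le_rpow hv hvu (by positivity)) hM).trans h.1,
    (rpow_le_rpow hv hvu (by linarith)).trans h.2⟩

lemma eventually_smallForPower {M ε d : ℝ} {x : ℕ → ℝ} (hd : 1 < d) (hε : 0 < ε)
    (hx : Tendsto x atTop (𝓝 0)) : ∀ᶠ j in atTop, SmallForPower M ε d (x j) := by
  have h₁ : Tendsto (fun j => M * x j ^ (d * ε)) atTop (𝓝 0) := by
    simpa using (hx.rpow_const_nhds_zero (by positivity)).const_mul M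
  have h₂ : Tendsto (fun j => x j ^ (d - 1)) atTop (𝓝 0) :=
    hx.rpow_const_nhds_zero (by linarith)
  exact (h₁.eventually_le_const (by norm_num)).and (h₂.eventually_le_const (by norm_num))

lemma perturbed_power_bounds {M ε d u r : ℝ} (hu : 0 < u) (hsmall : SmallForPower M ε d u)
    (hr : |r - u ^ d| ≤ M * u ^ (d * (1 + ε))) :
    0 < r ∧ r ≤ u / 2 ∧ |log r - d * log u| ≤ 2 * (M * u ^ (d * ε)) := by
  have hud : 0 < u ^ d := rpow_pos_of_pos hu d
  have hrel : |r - u ^ d| ≤ M * u ^ (d * ε) * u ^ d := by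
    rwa [mul_assoc, ← rpow_add hu, show d * ε + d = d * (1 + ε) by ring]
  obtain ⟨hr₀, hlog⟩ := abs_log_sub_log_le hud hsmall.1 hrel
  refine ⟨hr₀, ?_, by rwa [log_rpow hu] at hlog⟩
  have hud' : u ^ d = u ^ (d - 1) * u := by
    rw [← rpow_add_one hu.ne', sub_add_cancel]
  have h₁ := mul_le_mul_of_nonneg_right hsmall.1 hud.le
  have h₂ := mul_le_mul_of_nonneg_right hsmall.2 hu.le
  linarith [(abs_le.mp hrel).2]

lemma eventually_two_step_bounds {M ε d₁ d₂ : ℝ} {x ρ y : ℕ → ℝ} (hd₁ : 1 < d₁) (hd₂ : 1 < d₂)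
    (hM : 0 ≤ M) (hε : 0 < ε) (hx₀ : ∀ i, 0 < x i) (hx₁ : ∀ i, x i ≤ 1)
    (hx : Tendsto x atTop (𝓝 0)) (hρ : ∀ i, |ρ i - x i ^ d₁| ≤ M * x i ^ (d₁ * (1 + ε)))
    (hy : ∀ i, |y i - ρ i ^ d₂| ≤ M * ρ i ^ (d₂ * (1 + ε))) :
    ∀ᶠ i in atTop, |log (ρ i) - d₁ * log (x i)| ≤ 2 * M * x i ^ ε ∧
      |log (y i) - d₂ * log (ρ i)| ≤ 2 * M * x i ^ ε ∧ y i ≤ x i / 4 := by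
  filter_upwards [eventually_smallForPower hd₁ hε hx, eventually_smallForPower hd₂ hε hx]
    with i hs₁ hs₂
  obtain ⟨hρ₀, hρx, he⟩ := perturbed_power_bounds (hx₀ i) hs₁ (hρ i)
  have hρx' : ρ i ≤ x i := by linarith [hx₀ i]
  obtain ⟨-, hyρ, hf⟩ :=
    perturbed_power_bounds hρ₀ (hs₂.mono hd₂ hε.le hM hρ₀.le hρx') (hy i)
  have hpow {u d : ℝ} (hu₀ : 0 < u) (hu₁ : u ≤ 1) (hd : 1 < d) : u ^ (d * ε) ≤ u ^ ε :=
    rpow_le_rpow_of_exponent_ge hu₀ hu₁ (by nlinarith)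
  have h₁ := mul_le_mul_of_nonneg_left (hpow (hx₀ i) (hx₁ i) hd₁) hM
  have h₂ := mul_le_mul_of_nonneg_left ((hpow hρ₀ (hρx'.trans (hx₁ i)) hd₂).trans
    (rpow_le_rpow hρ₀.le hρx' hε.le)) hM
  exact ⟨by linarith, by linarith, by linarith⟩

lemma exists_eventually_le_geometric {w : ℕ → ℝ} {c : ℝ} (hc : 0 < c)
    (hw : ∀ᶠ n in atTop, w (n + 1) ≤ c * w n) : ∃ C, ∀ᶠ n in atTop, w n ≤ C * c ^ n := by
  obtain ⟨N, hN⟩ := eventually_atTop.mp hw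
  refine ⟨w N / c ^ N, ?_⟩
  filter_upwards [eventually_ge_atTop N] with n hn
  obtain ⟨k, rfl⟩ := Nat.exists_eq_add_of_le hn
  calc w (N + k) ≤ c ^ k * w N := le_geom (u := fun k => w (N + k)) hc.le k
          fun i _ => hN (N + i) (Nat.le_add_right N i)
    _ = w N / c ^ N * c ^ (N + k) := by rw [pow_add]; field_simp

lemma summable_natCast_mul_of_abs_le_geometric {f : ℕ → ℝ} {C c : ℝ} (hc₀ : 0 ≤ c) (hc₁ : c < 1)
    (hf : ∀ᶠ n in atTop, |f n| ≤ C * c ^ n) : Summable fun n : ℕ => (n : ℝ) * f n := by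
  have hg : Summable fun n : ℕ => C * ((n : ℝ) ^ 1 * c ^ n) :=
    (summable_pow_mul_geometric_of_norm_lt_one 1 (by rwa [norm_of_nonneg hc₀])).mul_left C
  refine hg.of_norm_bounded_eventually_nat ?_
  filter_upwards [hf] with n hn
  rw [norm_mul, Real.norm_natCast, Real.norm_eq_abs, pow_one, mul_left_comm]
  exact mul_le_mul_of_nonneg_left hn n.cast_nonneg

lemma summable_natCast_mul_of_abs_succ_le {f w : ℕ → ℝ} {c : ℝ} (hc₀ : 0 < c) (hc₁ : c < 1)
    (hw : ∀ᶠ n in atTop, w (n + 1) ≤ c * w n) (hf : ∀ᶠ n in atTop, |f (n + 1)| ≤ w n) :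
    Summable fun n : ℕ => (n : ℝ) * f n := by
  obtain ⟨C, hC⟩ := exists_eventually_le_geometric hc₀ hw
  refine summable_natCast_mul_of_abs_le_geometric hc₀.le hc₁ (C := C / c) ?_
  rw [← map_add_atTop_eq_nat 1, eventually_map]
  filter_upwards [hf, hC] with n hfn hCn
  calc |f (n + 1)| ≤ C * c ^ n := hfn.trans hCn
    _ = C / c * c ^ (n + 1) := by rw [pow_succ]; field_simp

lemma abs_linear_combination_le {α β γ u v w B : ℝ} (hu : |u| ≤ B) (hv : |v| ≤ B)
    (hw : |w| ≤ B) : |α * u + β * v + γ * w| ≤ (|α| + |β| + |γ|) * B := by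
  calc |α * u + β * v + γ * w| ≤ |α| * |u| + |β| * |v| + |γ| * |w| := by
        simpa only [abs_mul] using abs_add_three (α * u) (β * v) (γ * w)
    _ ≤ |α| * B + |β| * B + |γ| * B := by gcongr
    _ = (|α| + |β| + |γ|) * B := by ring

lemma hitting_remainder_succ_eq {C₁ E₁ C₂ E₂ a : ℝ} {z ρ t : ℕ → ℝ} (ha : 0 < a)
    (hz : ∀ i, 0 < z i)
    (htodd : ∀ i, t (2*i+1) - t (2*i) = -(1/E₁) * log (a * z i))
    (hteven : ∀ i, t (2*i+2) - t (2*i+1) = -(1/E₂) * log (ρ i)) (j : ℕ) :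
    (t (2*(j+1)+2) - t (2*(j+1))) - ((C₁/E₁) * (C₂/E₂)) * (t (2*(j+1)) - t (2*(j+1)-2))
        + (1 + C₁/E₂)/E₁ * log a
      = -(C₂/E₂/E₁) * (log (ρ j) - C₁/E₁ * log (a * z j))
        + -((1 + C₁/E₂)/E₁) * (log (z (j+1)) - C₂/E₂ * log (ρ j))
        + -(1/E₂) * (log (ρ (j+1)) - C₁/E₁ * log (a * z (j+1))) := by
  have h₁ : t (2*j+4) - t (2*j+3) = -(1/E₂) * log (ρ (j+1)) := hteven (j+1)
  have h₂ : t (2*j+3) - t (2*j+2) = -(1/E₁) * (log a + log (z (j+1))) := by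
    rw [← log_mul ha.ne' (hz (j+1)).ne']; exact htodd (j+1)
  show t (2*j+4) - t (2*j+2) - _ * (t (2*j+2) - t (2*j)) + _ = _
  rw [log_mul ha.ne' (hz (j+1)).ne']
  linear_combination h₁ + h₂ - (C₁/E₁*(C₂/E₂)) * (hteven j + htodd j)

theorem stmt_3_general
    (C₁ E₁ C₂ E₂ a ε M : ℝ)
    (hC₁ : C₁ > E₁) (hE₁ : E₁ > 0) (hC₂ : C₂ > E₂) (hE₂ : E₂ > 0)
    (ha : a ∈ Set.Ioo (0:ℝ) 1) (hε : ε ∈ Set.Ioo (0:ℝ) 1) (hM : M > 0)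
    (z ρ S U t : ℕ → ℝ)
    (hz01 : ∀ i, z i ∈ Set.Ioo (0:ℝ) 1)
    (hzlim : Tendsto z atTop (𝓝 0))
    (hρdef : ∀ i, ρ i = (a * z i) ^ (C₁/E₁) + S i)
    (hS : ∀ i, |S i| ≤ M * (a * z i) ^ ((C₁/E₁) * (1+ε)))
    (hzdef : ∀ i, z (i+1) = (ρ i) ^ (C₂/E₂) + U i)
    (hU : ∀ i, |U i| ≤ M * (ρ i) ^ ((C₂/E₂) * (1+ε)))
    (htodd : ∀ i, t (2*i+1) - t (2*i) = -(1/E₁) * Real.log (a * z i))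
    (hteven : ∀ i, t (2*i+2) - t (2*i+1) = -(1/E₂) * Real.log (ρ i)) :
    Summable (fun i : ℕ => (i : ℝ) *
      |(t (2*i+2) - t (2*i)) - ((C₁/E₁) * (C₂/E₂)) * (t (2*i) - t (2*i-2))
        + (1 + C₁/E₂)/E₁ * Real.log a|) := by
  obtain ⟨ha₀, ha₁⟩ := ha
  have hδ₁ : 1 < C₁ / E₁ := (one_lt_div hE₁).mpr hC₁
  have hδ₂ : 1 < C₂ / E₂ := (one_lt_div hE₂).mpr hC₂
  have hz₀ (i : ℕ) : 0 < z i := (hz01 i).1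
  have hx₀ (i : ℕ) : 0 < a * z i := mul_pos ha₀ (hz₀ i)
  have hxz (i : ℕ) : a * z i ≤ z i := mul_le_of_le_one_left (hz₀ i).le ha₁.le
  have hstep := eventually_two_step_bounds (ρ := ρ) (y := fun i => z (i+1)) hδ₁ hδ₂ hM.le hε.1 hx₀
    (fun i => (hxz i).trans (hz01 i).2.le) (by simpa using hzlim.const_mul a)
    (fun i => by rw [hρdef i, add_sub_cancel_left]; exact hS i)
    (fun i => by rw [hzdef i, add_sub_cancel_left]; exact hU i)
  set K := |-(C₂/E₂/E₁)| + |-((1 + C₁/E₂)/E₁)| + |-(1/E₂)|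
  have hK : 0 ≤ K := by positivity
  refine summable_natCast_mul_of_abs_succ_le (c := (1/4) ^ ε)
    (w := fun i => K * (2 * M * (a * z i) ^ ε))
    (rpow_pos_of_pos (by norm_num) ε) (rpow_lt_one (by norm_num) (by norm_num) hε.1) ?_ ?_
  · filter_upwards [hstep] with i hi
    have hx_decay : (a * z (i+1)) ^ ε ≤ (1/4) ^ ε * (a * z i) ^ ε := by
      rw [← mul_rpow (by norm_num) (hx₀ i).le]
      exact rpow_le_rpow (hx₀ _).le (by linarith [hxz (i+1), hi.2.2]) hε.1.le
    calc K * (2 * M * (a * z (i+1)) ^ ε) ≤ K * (2 * M * ((1/4) ^ ε * (a * z i) ^ ε)) := by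
          gcongr
      _ = (1/4) ^ ε * (K * (2 * M * (a * z i) ^ ε)) := by ring
  · filter_upwards [hstep, (tendsto_add_atTop_nat 1).eventually hstep] with i hi hi'
    rw [abs_abs, hitting_remainder_succ_eq ha₀ hz₀ htodd hteven]
    have hx_succ : (a * z (i+1)) ^ ε ≤ (a * z i) ^ ε :=
      rpow_le_rpow (hx₀ _).le (by linarith [hxz (i+1), hi.2.2, hx₀ i]) hε.1.le
    exact abs_linear_combination_le hi.1 hi.2.1
      (hi'.1.trans (mul_le_mul_of_nonneg_left hx_succ (by linarith)))

/-- Hitting-times setup for an orbit in the basin of a Bykov attractor: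
`z i` and `ρ i` are the height and radial coordinates of the successive hits
at the cross sections, and `t` is the sequence of hitting times. -/
theorem stmt_3
    (C₁ E₁ C₂ E₂ a ε M : ℝ)
    (hC₁ : C₁ > E₁) (hE₁ : E₁ > 0) (hC₂ : C₂ > E₂) (hE₂ : E₂ > 0)
    (ha : a ∈ Set.Ioo (0:ℝ) 1) (hε : ε ∈ Set.Ioo (0:ℝ) 1) (hM : M > 0)
    (z ρ S U t : ℕ → ℝ)
    (hz01 : ∀ i, z i ∈ Set.Ioo (0:ℝ) 1) (hρ01 : ∀ i, ρ i ∈ Set.Ioo (0:ℝ) 1)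
    (hzlim : Tendsto z atTop (𝓝 0))
    (hρdef : ∀ i, ρ i = (a * z i) ^ (C₁/E₁) + S i)
    (hS : ∀ i, |S i| ≤ M * (a * z i) ^ ((C₁/E₁) * (1+ε)))
    (hzdef : ∀ i, z (i+1) = (ρ i) ^ (C₂/E₂) + U i)
    (hU : ∀ i, |U i| ≤ M * (ρ i) ^ ((C₂/E₂) * (1+ε)))
    (ht0 : t 0 = 0)
    (htodd : ∀ i, t (2*i+1) - t (2*i) = -(1/E₁) * Real.log (a * z i))
    (hteven : ∀ i, t (2*i+2) - t (2*i+1) = -(1/E₂) * Real.log (ρ i)) :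
    Summable (fun i : ℕ => (i : ℝ) *
      |(t (2*i+2) - t (2*i)) - ((C₁/E₁) * (C₂/E₂)) * (t (2*i) - t (2*i-2))
        + (1 + C₁/E₂)/E₁ * Real.log a|) :=
  stmt_3_general C₁ E₁ C₂ E₂ a ε M hC₁ hE₁ hC₂ hE₂ ha hε hM z ρ S U t hz01 hzlim hρdef hS hzdef hU
    htodd hteven
end

section
/- With the hitting-times setup below, lim_{i→∞} (t_{2i+2} − t_{2i+1})/(t_{2i+1} − t_{2i}) = γ₁. (Corollary 6.2(1).) -/
open Real Filter Topology

/-!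
Write `x i = a z i` and `δ₁ = C₁/E₁`. The error bound on `S` gives `ρ i / x i ^ δ₁ → 1`, so
`log ρ i = δ₁ log x i + o(1)`; since `log x i → -∞`, this yields `log ρ i / log x i → δ₁`.
The ratio of consecutive time gaps is `(E₁/E₂) · log ρ i / log x i`, whose limit is
`(E₁/E₂) δ₁ = C₁/E₂`.
-/

section

variable {ι : Type*} {l : Filter ι} {x y : ι → ℝ} {p : ℝ}

lemma tendsto_div_rpow_of_abs_sub_rpow_le_s4 {q M : ℝ} (hx : ∀ i, 0 < x i)
    (hx0 : Tendsto x l (𝓝 0)) (hpq : p < q)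
    (hy : ∀ i, |y i - x i ^ p| ≤ M * x i ^ q) :
    Tendsto (fun i => y i / x i ^ p) l (𝓝 1) := by
  have hsmall : Tendsto (fun i => M * x i ^ (q - p)) l (𝓝 0) := by
    simpa [zero_rpow (sub_pos.2 hpq).ne'] using
      ((continuousAt_rpow_const 0 _ (Or.inr (sub_pos.2 hpq).le)).tendsto.comp hx0).const_mul M
  have hbound : ∀ i, ‖y i / x i ^ p - 1‖ ≤ M * x i ^ (q - p) := fun i => by
    have hxp : 0 < x i ^ p := rpow_pos_of_pos (hx i) p
    calc ‖y i / x i ^ p - 1‖ = |y i - x i ^ p| / x i ^ p := by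
          rw [div_sub_one hxp.ne', norm_eq_abs, abs_div, abs_of_pos hxp]
      _ ≤ M * x i ^ q / x i ^ p := by gcongr; exact hy i
      _ = M * x i ^ (q - p) := by rw [rpow_sub (hx i), mul_div_assoc]
  simpa using (squeeze_zero_norm hbound hsmall).add_const 1

lemma tendsto_log_div_log_of_div_rpow_tendsto_one (hx : ∀ i, 0 < x i) (hy : ∀ i, y i ≠ 0)
    (hlog : Tendsto (fun i => log (x i)) l atBot)
    (hyx : Tendsto (fun i => y i / x i ^ p) l (𝓝 1)) :
    Tendsto (fun i => log (y i) / log (x i)) l (𝓝 p) := by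
  have hlog_ratio : Tendsto (fun i => log (y i / x i ^ p)) l (𝓝 0) := by
    simpa [Function.comp_def] using (continuousAt_log one_ne_zero).tendsto.comp hyx
  have hinv : Tendsto (fun i => (log (x i))⁻¹) l (𝓝 0) := tendsto_inv_atBot_zero.comp hlog
  have h := (hlog_ratio.mul hinv).const_add p
  rw [mul_zero, add_zero] at h
  refine h.congr' ?_
  filter_upwards [hlog.eventually_ne_atBot 0] with i hi
  rw [log_div (hy i) (rpow_pos_of_pos (hx i) p).ne', log_rpow (hx i)]
  field_simp
  ring

end

theorem stmt_4_general
    (C₁ E₁ E₂ a ε M : ℝ)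
    (hC₁ : C₁ > E₁) (hE₁ : E₁ > 0)
    (ha : a ∈ Set.Ioo (0:ℝ) 1) (hε : ε ∈ Set.Ioo (0:ℝ) 1)
    (z ρ S t : ℕ → ℝ)
    (hz01 : ∀ i, z i ∈ Set.Ioo (0:ℝ) 1) (hρ01 : ∀ i, ρ i ∈ Set.Ioo (0:ℝ) 1)
    (hzlim : Tendsto z atTop (𝓝 0))
    (hρdef : ∀ i, ρ i = (a * z i) ^ (C₁/E₁) + S i)
    (hS : ∀ i, |S i| ≤ M * (a * z i) ^ ((C₁/E₁) * (1+ε)))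
    (htodd : ∀ i, t (2*i+1) - t (2*i) = -(1/E₁) * Real.log (a * z i))
    (hteven : ∀ i, t (2*i+2) - t (2*i+1) = -(1/E₂) * Real.log (ρ i)) :
    Tendsto (fun i => (t (2*i+2) - t (2*i+1)) / (t (2*i+1) - t (2*i)))
      atTop (𝓝 (C₁/E₂)) := by
  have hx : ∀ i, 0 < a * z i := fun i => mul_pos ha.1 (hz01 i).1
  have hx0 : Tendsto (fun i => a * z i) atTop (𝓝 0) := by simpa using hzlim.const_mul a
  have hlog : Tendsto (fun i => log (a * z i)) atTop atBot :=
    tendsto_log_nhdsGT_zero.comp (tendsto_nhdsWithin_iff.2 ⟨hx0, .of_forall hx⟩)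
  have hδ₁ : C₁/E₁ < C₁/E₁ * (1 + ε) :=
    lt_mul_of_one_lt_right (div_pos (hE₁.trans hC₁) hE₁) (by linarith [hε.1])
  have hρx : Tendsto (fun i => ρ i / (a * z i) ^ (C₁/E₁)) atTop (𝓝 1) :=
    tendsto_div_rpow_of_abs_sub_rpow_le_s4 hx hx0 hδ₁ fun i => by
      rw [hρdef i, add_sub_cancel_left]; exact hS i
  have hratio := (tendsto_log_div_log_of_div_rpow_tendsto_one hx (fun i => (hρ01 i).1.ne')
    hlog hρx).const_mul ((-(1/E₂)) / (-(1/E₁)))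
  have hlim : (-(1/E₂)) / (-(1/E₁)) * (C₁/E₁) = C₁/E₂ := by field_simp
  rw [hlim] at hratio
  refine hratio.congr fun i => ?_
  rw [hteven i, htodd i, mul_div_mul_comm]

/-- Hitting-times setup for an orbit in the basin of a Bykov attractor:
`z i` and `ρ i` are the height and radial coordinates of the successive hits
at the cross sections, and `t` is the sequence of hitting times. -/
theorem stmt_4
    (C₁ E₁ C₂ E₂ a ε M : ℝ)
    (hC₁ : C₁ > E₁) (hE₁ : E₁ > 0) (hC₂ : C₂ > E₂) (hE₂ : E₂ > 0)
    (ha : a ∈ Set.Ioo (0:ℝ) 1) (hε : ε ∈ Set.Ioo (0:ℝ) 1) (hM : M > 0)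
    (z ρ S U t : ℕ → ℝ)
    (hz01 : ∀ i, z i ∈ Set.Ioo (0:ℝ) 1) (hρ01 : ∀ i, ρ i ∈ Set.Ioo (0:ℝ) 1)
    (hzlim : Tendsto z atTop (𝓝 0))
    (hρdef : ∀ i, ρ i = (a * z i) ^ (C₁/E₁) + S i)
    (hS : ∀ i, |S i| ≤ M * (a * z i) ^ ((C₁/E₁) * (1+ε)))
    (hzdef : ∀ i, z (i+1) = (ρ i) ^ (C₂/E₂) + U i)
    (hU : ∀ i, |U i| ≤ M * (ρ i) ^ ((C₂/E₂) * (1+ε)))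
    (ht0 : t 0 = 0)
    (htodd : ∀ i, t (2*i+1) - t (2*i) = -(1/E₁) * Real.log (a * z i))
    (hteven : ∀ i, t (2*i+2) - t (2*i+1) = -(1/E₂) * Real.log (ρ i)) :
    Tendsto (fun i => (t (2*i+2) - t (2*i+1)) / (t (2*i+1) - t (2*i)))
      atTop (𝓝 (C₁/E₂)) :=
  stmt_4_general C₁ E₁ E₂ a ε M hC₁ hE₁ ha hε z ρ S t hz01 hρ01 hzlim hρdef hS htodd hteven
end

section
/- With the hitting-times setup below, lim_{i→∞} (t_{2i+1} − t_{2i})/(t_{2i} − t_{2i−1}) = γ₂. (Corollary 6.2(2).) -/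
/-!
Since `log ρᵢ → -∞`, each time ratio is asymptotically the ratio of the logarithms of the
consecutive coordinates. The hypotheses say `z_{i+1} = ρᵢ^δ₂ (1 + o(1))`, so
`log (a z_{i+1}) = δ₂ log ρᵢ + O(1)`, whence
`(t_{2i+3} - t_{2i+2}) / (t_{2i+2} - t_{2i+1}) = (E₂/E₁) · log (a z_{i+1}) / log ρᵢ`
tends to `(E₂/E₁) δ₂ = γ₂`.
-/

open Real Filter Topology

variable {α : Type*} {l : Filter α}

theorem tendsto_nhds_zero_of_abs_sub_rpow_le {x y : α → ℝ} {p q M : ℝ}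
    (hp : 0 < p) (hq : 0 < q) (hx : Tendsto x l (𝓝 0))
    (hy : ∀ i, |y i - x i ^ p| ≤ M * x i ^ q) :
    Tendsto y l (𝓝 0) := by
  have hdiff : Tendsto (fun i => y i - x i ^ p) l (𝓝 0) :=
    squeeze_zero_norm hy (by simpa using (hx.rpow_const_nhds_zero hq).const_mul M)
  simpa using hdiff.add (hx.rpow_const_nhds_zero hp)

theorem tendsto_div_rpow_of_abs_sub_rpow_le_s5 {u v : α → ℝ} {δ ε M : ℝ} (hδε : 0 < δ * ε)
    (hv : ∀ i, 0 < v i) (hv0 : Tendsto v l (𝓝 0))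
    (hu : ∀ i, |u i - v i ^ δ| ≤ M * v i ^ (δ * (1 + ε))) :
    Tendsto (fun i => u i / v i ^ δ) l (𝓝 1) := by
  rw [tendsto_iff_norm_sub_tendsto_zero]
  refine squeeze_zero_norm (fun i => ?_)
    (by simpa using (hv0.rpow_const_nhds_zero hδε).const_mul M)
  have hvδ : 0 < v i ^ δ := rpow_pos_of_pos (hv i) δ
  rw [norm_norm, Real.norm_eq_abs, div_sub_one hvδ.ne', abs_div, abs_of_pos hvδ,
    div_le_iff₀ hvδ, mul_assoc, ← rpow_add (hv i), show δ * ε + δ = δ * (1 + ε) by ring]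
  exact hu i

theorem tendsto_div_of_tendsto_sub_mul {f g : α → ℝ} {δ L : ℝ}
    (hfg : Tendsto (fun i => f i - δ * g i) l (𝓝 L)) (hg : Tendsto g l atBot) :
    Tendsto (fun i => f i / g i) l (𝓝 δ) := by
  have hquot : Tendsto (fun i => (f i - δ * g i) / g i + δ) l (𝓝 (0 + δ)) :=
    (hfg.div_atBot hg).add_const δ
  rw [zero_add] at hquot
  refine hquot.congr' ?_
  filter_upwards [hg.eventually_ne_atBot 0] with i hi
  field_simp
  ring

theorem tendsto_log_mul_div_log_of_abs_sub_rpow_le {u v : α → ℝ} {c δ ε M : ℝ} (hc : 0 < c)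
    (hδε : 0 < δ * ε) (hu : ∀ i, 0 < u i) (hv : ∀ i, 0 < v i) (hv0 : Tendsto v l (𝓝 0))
    (huv : ∀ i, |u i - v i ^ δ| ≤ M * v i ^ (δ * (1 + ε))) :
    Tendsto (fun i => log (c * u i) / log (v i)) l (𝓝 δ) := by
  have hlogv : Tendsto (fun i => log (v i)) l atBot :=
    tendsto_log_nhdsGT_zero.comp (tendsto_nhdsWithin_iff.2 ⟨hv0, .of_forall hv⟩)
  refine tendsto_div_of_tendsto_sub_mul (L := log c + log 1) ?_ hlogv
  have hquot := tendsto_div_rpow_of_abs_sub_rpow_le_s5 hδε hv hv0 huv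
  refine ((hquot.log one_ne_zero).const_add (log c)).congr fun i => ?_
  rw [log_div (hu i).ne' (rpow_pos_of_pos (hv i) δ).ne', log_rpow (hv i),
    log_mul hc.ne' (hu i).ne']
  ring

theorem stmt_5_general
    (C₁ E₁ C₂ E₂ a ε M : ℝ)
    (hC₁ : C₁ > E₁) (hE₁ : E₁ > 0) (hC₂ : C₂ > E₂) (hE₂ : E₂ > 0)
    (ha : a ∈ Set.Ioo (0:ℝ) 1) (hε : ε ∈ Set.Ioo (0:ℝ) 1)
    (z ρ S U t : ℕ → ℝ)
    (hz01 : ∀ i, z i ∈ Set.Ioo (0:ℝ) 1) (hρ01 : ∀ i, ρ i ∈ Set.Ioo (0:ℝ) 1)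
    (hzlim : Tendsto z atTop (𝓝 0))
    (hρdef : ∀ i, ρ i = (a * z i) ^ (C₁/E₁) + S i)
    (hS : ∀ i, |S i| ≤ M * (a * z i) ^ ((C₁/E₁) * (1+ε)))
    (hzdef : ∀ i, z (i+1) = (ρ i) ^ (C₂/E₂) + U i)
    (hU : ∀ i, |U i| ≤ M * (ρ i) ^ ((C₂/E₂) * (1+ε)))
    (htodd : ∀ i, t (2*i+1) - t (2*i) = -(1/E₁) * Real.log (a * z i))
    (hteven : ∀ i, t (2*i+2) - t (2*i+1) = -(1/E₂) * Real.log (ρ i)) :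
    Tendsto (fun i => (t (2*i+1) - t (2*i)) / (t (2*i) - t (2*i-1)))
      atTop (𝓝 (C₂/E₁)) := by
  have hδ₁ : 0 < C₁ / E₁ := div_pos (hE₁.trans hC₁) hE₁
  have hδ₂ : 0 < C₂ / E₂ := div_pos (hE₂.trans hC₂) hE₂
  have hρlim : Tendsto ρ atTop (𝓝 0) :=
    tendsto_nhds_zero_of_abs_sub_rpow_le hδ₁ (mul_pos hδ₁ (by linarith [hε.1] : 0 < 1 + ε))
      (by simpa using hzlim.const_mul a) fun i => by rw [hρdef i, add_sub_cancel_left]; exact hS i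
  have hlogs : Tendsto (fun i => log (a * z (i+1)) / log (ρ i)) atTop (𝓝 (C₂/E₂)) :=
    tendsto_log_mul_div_log_of_abs_sub_rpow_le ha.1 (mul_pos hδ₂ hε.1) (fun i => (hz01 _).1)
      (fun i => (hρ01 i).1) hρlim fun i => by rw [hzdef i, add_sub_cancel_left]; exact hU i
  have hratio : ∀ i, (t (2*(i+1)+1) - t (2*(i+1))) / (t (2*(i+1)) - t (2*(i+1)-1))
      = E₂/E₁ * (log (a * z (i+1)) / log (ρ i)) := by
    intro i
    rw [htodd, show 2*(i+1)-1 = 2*i+1 by omega, show 2*(i+1) = 2*i+2 by ring, hteven]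
    field_simp
  rw [← tendsto_add_atTop_iff_nat 1]
  have hγ₂ : E₂/E₁ * (C₂/E₂) = C₂/E₁ := by field_simp
  exact hγ₂ ▸ (hlogs.const_mul (E₂/E₁)).congr fun i => (hratio i).symm

/-- Hitting-times setup for an orbit in the basin of a Bykov attractor:
`z i` and `ρ i` are the height and radial coordinates of the successive hits
at the cross sections, and `t` is the sequence of hitting times. -/
theorem stmt_5
    (C₁ E₁ C₂ E₂ a ε M : ℝ)
    (hC₁ : C₁ > E₁) (hE₁ : E₁ > 0) (hC₂ : C₂ > E₂) (hE₂ : E₂ > 0)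
    (ha : a ∈ Set.Ioo (0:ℝ) 1) (hε : ε ∈ Set.Ioo (0:ℝ) 1) (hM : M > 0)
    (z ρ S U t : ℕ → ℝ)
    (hz01 : ∀ i, z i ∈ Set.Ioo (0:ℝ) 1) (hρ01 : ∀ i, ρ i ∈ Set.Ioo (0:ℝ) 1)
    (hzlim : Tendsto z atTop (𝓝 0))
    (hρdef : ∀ i, ρ i = (a * z i) ^ (C₁/E₁) + S i)
    (hS : ∀ i, |S i| ≤ M * (a * z i) ^ ((C₁/E₁) * (1+ε)))
    (hzdef : ∀ i, z (i+1) = (ρ i) ^ (C₂/E₂) + U i)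
    (hU : ∀ i, |U i| ≤ M * (ρ i) ^ ((C₂/E₂) * (1+ε)))
    (ht0 : t 0 = 0)
    (htodd : ∀ i, t (2*i+1) - t (2*i) = -(1/E₁) * Real.log (a * z i))
    (hteven : ∀ i, t (2*i+2) - t (2*i+1) = -(1/E₂) * Real.log (ρ i)) :
    Tendsto (fun i => (t (2*i+1) - t (2*i)) / (t (2*i) - t (2*i-1)))
      atTop (𝓝 (C₂/E₁)) :=
  stmt_5_general C₁ E₁ C₂ E₂ a ε M hC₁ hE₁ hC₂ hE₂ ha hε z ρ S U t hz01 hρ01 hzlim hρdef hS hzdef hU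
    htodd hteven
end

section
/- With the hitting-times setup below and any real constants ω₁, ω₂ > 0, lim_{i→∞} [ω₁·(t_{2i+1} − t_{2i}) + ω₂·(t_{2i+2} − t_{2i+1})]/(t_{2i+2} − t_{2i}) = (ω₁ + γ₁·ω₂)/(γ₁ + 1). (Corollary 6.2(4).) -/
/-!
Write `x i = a * z i`. The bound on `S` makes `ρ i = x i ^ δ₁ * (1 + o(1))`, and since
`log (x i) → -∞` this gives `log (ρ i) / log (x i) → δ₁`. Hence the ratio of the two half-step
durations, `(E₁ / E₂) * log (ρ i) / log (x i)`, tends to `γ₁ = C₁ / E₂`, and the weighted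
average of the durations tends to `(ω₁ + γ₁ * ω₂) / (γ₁ + 1)`.
-/

open Real Filter Topology

section

variable {ι : Type*} {l : Filter ι} {x S : ι → ℝ}

lemma tendsto_div_rpow_of_abs_le_rpow_add {δ η M : ℝ} (hx : Tendsto x l (𝓝[>] 0))
    (hη : 0 < η) (hS : ∀ᶠ i in l, |S i| ≤ M * x i ^ (δ + η)) :
    Tendsto (fun i => S i / x i ^ δ) l (𝓝 0) := by
  obtain ⟨hx0, hxpos⟩ := tendsto_nhdsWithin_iff.1 hx
  have hbound : Tendsto (fun i => M * x i ^ η) l (𝓝 0) := by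
    simpa [Real.zero_rpow hη.ne'] using
      ((Real.continuousAt_rpow_const 0 η (Or.inr hη.le)).tendsto.comp hx0).const_mul M
  refine squeeze_zero_norm' ?_ hbound
  filter_upwards [hS, hxpos] with i hSi hxi
  have hxδ : 0 < x i ^ δ := Real.rpow_pos_of_pos hxi δ
  rw [Real.norm_eq_abs, abs_div, abs_of_pos hxδ, div_le_iff₀ hxδ]
  calc |S i| ≤ M * x i ^ (δ + η) := hSi
    _ = M * x i ^ η * x i ^ δ := by rw [Real.rpow_add hxi]; ring

lemma tendsto_rpow_add_div_rpow {δ η M : ℝ} (hx : Tendsto x l (𝓝[>] 0))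
    (hη : 0 < η) (hS : ∀ᶠ i in l, |S i| ≤ M * x i ^ (δ + η)) :
    Tendsto (fun i => (x i ^ δ + S i) / x i ^ δ) l (𝓝 1) := by
  have h := (tendsto_div_rpow_of_abs_le_rpow_add hx hη hS).const_add 1
  rw [add_zero] at h
  refine h.congr' ?_
  filter_upwards [(tendsto_nhdsWithin_iff.1 hx).2] with i hxi
  rw [add_div, div_self (Real.rpow_pos_of_pos hxi δ).ne']

lemma tendsto_log_div_log_of_tendsto_div_rpow {ρ : ι → ℝ} {δ c : ℝ}
    (hx : Tendsto x l (𝓝[>] 0)) (hc : 0 < c)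
    (hρ : Tendsto (fun i => ρ i / x i ^ δ) l (𝓝 c)) :
    Tendsto (fun i => log (ρ i) / log (x i)) l (𝓝 δ) := by
  have hlog : Tendsto (fun i => log (x i)) l atBot := Real.tendsto_log_nhdsGT_zero.comp hx
  have hxpos : ∀ᶠ i in l, 0 < x i := (tendsto_nhdsWithin_iff.1 hx).2
  have hlim : Tendsto (fun i => δ + log (ρ i / x i ^ δ) * (log (x i))⁻¹) l (𝓝 (δ + log c * 0)) :=
    (((Real.continuousAt_log hc.ne').tendsto.comp hρ).mul hlog.inv_tendsto_atBot).const_add δ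
  rw [mul_zero, add_zero] at hlim
  refine hlim.congr' ?_
  filter_upwards [hxpos, hρ.eventually_const_lt hc, hlog.eventually_lt_atBot 0]
    with i hxi hquot hlogi
  have hxδ : 0 < x i ^ δ := Real.rpow_pos_of_pos hxi δ
  have hρi : ρ i ≠ 0 := fun h => by simp [h] at hquot
  rw [Real.log_div hρi hxδ.ne', Real.log_rpow hxi]
  field_simp [hlogi.ne]
  ring

lemma tendsto_weighted_average_of_tendsto_div {T₁ T₂ : ι → ℝ} {γ : ℝ} (hT₁ : ∀ᶠ i in l, T₁ i ≠ 0)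
    (hT : Tendsto (fun i => T₂ i / T₁ i) l (𝓝 γ)) (hγ : γ + 1 ≠ 0) (ω₁ ω₂ : ℝ) :
    Tendsto (fun i => (ω₁ * T₁ i + ω₂ * T₂ i) / (T₁ i + T₂ i)) l
      (𝓝 ((ω₁ + γ * ω₂) / (γ + 1))) := by
  refine (((hT.mul_const ω₂).const_add ω₁).div (hT.add_const 1) hγ).congr' ?_
  filter_upwards [hT₁] with i hi
  -- no hypothesis on `T₁ i + T₂ i` is needed: where it vanishes both sides are `x / 0 = 0`
  change (ω₁ + T₂ i / T₁ i * ω₂) / (T₂ i / T₁ i + 1) = _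
  rw [← mul_div_mul_left (ω₁ + T₂ i / T₁ i * ω₂) _ hi]
  congr 1
  · field_simp
  · field_simp
    ring

end

theorem stmt_7_general
    (C₁ E₁ E₂ a ε M : ℝ)
    (hC₁ : C₁ > E₁) (hE₁ : E₁ > 0) (hE₂ : E₂ > 0)
    (ha : a ∈ Set.Ioo (0:ℝ) 1) (hε : ε ∈ Set.Ioo (0:ℝ) 1)
    (z ρ S t : ℕ → ℝ)
    (hz01 : ∀ i, z i ∈ Set.Ioo (0:ℝ) 1)
    (hzlim : Tendsto z atTop (𝓝 0))
    (hρdef : ∀ i, ρ i = (a * z i) ^ (C₁/E₁) + S i)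
    (hS : ∀ i, |S i| ≤ M * (a * z i) ^ ((C₁/E₁) * (1+ε)))
    (htodd : ∀ i, t (2*i+1) - t (2*i) = -(1/E₁) * Real.log (a * z i))
    (hteven : ∀ i, t (2*i+2) - t (2*i+1) = -(1/E₂) * Real.log (ρ i))     (ω₁ ω₂ : ℝ) :
    Tendsto (fun i => (ω₁ * (t (2*i+1) - t (2*i)) + ω₂ * (t (2*i+2) - t (2*i+1)))
        / (t (2*i+2) - t (2*i)))
      atTop (𝓝 ((ω₁ + (C₁/E₂) * ω₂) / (C₁/E₂ + 1))) := by
  have hC₁pos : 0 < C₁ := hE₁.trans hC₁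
  have hδ₁ : 0 < C₁ / E₁ := by positivity
  have hx : Tendsto (fun i => a * z i) atTop (𝓝[>] 0) := tendsto_nhdsWithin_iff.2
    ⟨by simpa using hzlim.const_mul a, .of_forall fun i => mul_pos ha.1 (hz01 i).1⟩
  have hρ : Tendsto (fun i => ρ i / (a * z i) ^ (C₁/E₁)) atTop (𝓝 1) := by
    simp only [hρdef]
    exact tendsto_rpow_add_div_rpow hx (mul_pos hδ₁ hε.1)
      (.of_forall fun i => (hS i).trans_eq (by rw [mul_one_add]))
  have hT₁ : ∀ᶠ i in atTop, t (2*i+1) - t (2*i) ≠ 0 := by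
    filter_upwards [(Real.tendsto_log_nhdsGT_zero.comp hx).eventually_lt_atBot 0] with i hi
    rw [htodd]
    exact mul_ne_zero (by simp [hE₁.ne']) hi.ne
  have hT : Tendsto (fun i => (t (2*i+2) - t (2*i+1)) / (t (2*i+1) - t (2*i))) atTop
      (𝓝 (C₁/E₂)) := by
    have h := (tendsto_log_div_log_of_tendsto_div_rpow hx one_pos hρ).const_mul (E₁/E₂)
    rw [show E₁/E₂ * (C₁/E₁) = C₁/E₂ by field_simp] at h
    refine h.congr fun i => ?_
    rw [htodd, hteven]
    field_simp
  refine (tendsto_weighted_average_of_tendsto_div hT₁ hT (by positivity) ω₁ ω₂).congr fun i => ?_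
  congr 1
  ring

/-- Hitting-times setup for an orbit in the basin of a Bykov attractor:
`z i` and `ρ i` are the height and radial coordinates of the successive hits
at the cross sections, and `t` is the sequence of hitting times. -/
theorem stmt_7
    (C₁ E₁ C₂ E₂ a ε M : ℝ)
    (hC₁ : C₁ > E₁) (hE₁ : E₁ > 0) (hC₂ : C₂ > E₂) (hE₂ : E₂ > 0)
    (ha : a ∈ Set.Ioo (0:ℝ) 1) (hε : ε ∈ Set.Ioo (0:ℝ) 1) (hM : M > 0)
    (z ρ S U t : ℕ → ℝ)
    (hz01 : ∀ i, z i ∈ Set.Ioo (0:ℝ) 1) (hρ01 : ∀ i, ρ i ∈ Set.Ioo (0:ℝ) 1)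
    (hzlim : Tendsto z atTop (𝓝 0))
    (hρdef : ∀ i, ρ i = (a * z i) ^ (C₁/E₁) + S i)
    (hS : ∀ i, |S i| ≤ M * (a * z i) ^ ((C₁/E₁) * (1+ε)))
    (hzdef : ∀ i, z (i+1) = (ρ i) ^ (C₂/E₂) + U i)
    (hU : ∀ i, |U i| ≤ M * (ρ i) ^ ((C₂/E₂) * (1+ε)))
    (ht0 : t 0 = 0)
    (htodd : ∀ i, t (2*i+1) - t (2*i) = -(1/E₁) * Real.log (a * z i))
    (hteven : ∀ i, t (2*i+2) - t (2*i+1) = -(1/E₂) * Real.log (ρ i))     (ω₁ ω₂ : ℝ) (hω₁ : ω₁ > 0) (hω₂ : ω₂ > 0) :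
    Tendsto (fun i => (ω₁ * (t (2*i+1) - t (2*i)) + ω₂ * (t (2*i+2) - t (2*i+1)))
        / (t (2*i+2) - t (2*i)))
      atTop (𝓝 ((ω₁ + (C₁/E₂) * ω₂) / (C₁/E₂ + 1))) :=
  stmt_7_general C₁ E₁ E₂ a ε M hC₁ hE₁ hE₂ ha hε z ρ S t hz01 hzlim hρdef hS htodd hteven ω₁ ω₂
end

section
/- In the adjusted-times setup below, assume that ∑_{i=1}^∞ i·|R_i| < ∞. Let T̃₀ := T₀ + ∑_{j=1}^∞ R_j/δ^j and define the sequence (T̃_i)_{i≥0} by T̃_i = δ·T̃_{i−1} + c for i ≥ 1. Then, for every i ≥ 0, |T_i − T̃_i| ≤ ∑_{j=i+1}^∞ |R_j|; consequently the series ∑_{i=0}^∞ |T_i − T̃_i| converges (it is bounded by ∑_{i=1}^∞ i·|R_i|), and in particular lim_{i→∞} (T_i − T̃_i) = 0. (Lemma 8.2.) -/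
open Real Filter Topology Finset

/-
The defect `D i = T i - T̃ i` obeys `D (i+1) = δ D i + R (i+1)`. The choice of `T̃ 0` is the
unique one for which `D` stays bounded, and it forces `D i = -∑_{k≥0} R (i+k+1) / δ^(k+1)`;
as `δ ≥ 1` this gives `|D i| ≤ ∑_{j>i} |R j|`. Summing these tails over `i` counts each
`|R j|` exactly `j` times.
-/

theorem Summable.comp_add_left {f : ℕ → ℝ} (hf : Summable f) (i : ℕ) :
    Summable fun k => f (i + k) := by
  simpa only [add_comm] using (summable_nat_add_iff i).mpr hf

theorem tsum_add_left_eq_add {f : ℕ → ℝ} (hf : Summable f) (i : ℕ) :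
    ∑' k, f (i + k) = f i + ∑' k, f (i + 1 + k) := by
  rw [(hf.comp_add_left i).tsum_eq_zero_add]
  simp only [add_zero, add_assoc, add_comm 1]

theorem eq_neg_tsum_div_pow_of_succ_eq {δ : ℝ} (hδ : δ ≠ 0) {D r : ℕ → ℝ}
    (hr : Summable fun k => r k / δ ^ (k + 1)) (h0 : D 0 = -∑' k, r k / δ ^ (k + 1))
    (hsucc : ∀ i, D (i + 1) = δ * D i + r i) (i : ℕ) :
    D i = -∑' k, r (i + k) / δ ^ (k + 1) := by
  have hshift : ∀ i, Summable fun k => r (i + k) / δ ^ (k + 1) := fun i =>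
    ((hr.comp_add_left i).mul_left (δ ^ i)).congr fun k => by
      rw [add_assoc, pow_add]
      field_simp
  have hpeel : ∀ i, δ * ∑' k, r (i + k) / δ ^ (k + 1)
      = r i + ∑' k, r (i + 1 + k) / δ ^ (k + 1) := by
    intro i
    rw [(hshift i).tsum_eq_zero_add, mul_add, ← tsum_mul_left]
    congr 1
    · simp only [add_zero, zero_add, pow_one]
      field_simp
    · refine tsum_congr fun k => ?_
      rw [show i + (k + 1) = i + 1 + k by omega, pow_succ]
      field_simp
  induction i with
  | zero => simpa using h0
  | succ i ih => rw [hsucc, ih, mul_neg, hpeel]; ring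

theorem abs_div_pow_le {δ : ℝ} (hδ : 1 ≤ δ) (x : ℝ) (n : ℕ) : |x / δ ^ n| ≤ |x| := by
  rw [abs_div, abs_of_pos (pow_pos (zero_lt_one.trans_le hδ) n)]
  exact div_le_self (abs_nonneg x) (one_le_pow₀ hδ)

theorem abs_tsum_div_pow_le {δ : ℝ} (hδ : 1 ≤ δ) {a : ℕ → ℝ} (ha : Summable fun k => |a k|) :
    |∑' k, a k / δ ^ (k + 1)| ≤ ∑' k, |a k| :=
  tsum_of_norm_bounded (f := fun k => a k / δ ^ (k + 1)) ha.hasSum fun _ =>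
    abs_div_pow_le hδ _ _

theorem sum_range_tsum_add_left {a : ℕ → ℝ} (ha : Summable a) (N : ℕ) :
    ∑ i ∈ range N, ∑' k, a (i + k)
      = ∑ n ∈ range N, ((n : ℝ) + 1) * a n + N * ∑' k, a (N + k) := by
  induction N with
  | zero => simp
  | succ N ih =>
    rw [sum_range_succ, sum_range_succ, ih, tsum_add_left_eq_add ha N]
    push_cast
    ring

theorem hasSum_tsum_add_left {a : ℕ → ℝ} (ha : ∀ n, 0 ≤ a n)
    (h : Summable fun n : ℕ => ((n : ℝ) + 1) * a n) :
    HasSum (fun i => ∑' k, a (i + k)) (∑' n : ℕ, ((n : ℝ) + 1) * a n) := by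
  have hsum : Summable a := h.of_nonneg_of_le ha fun n =>
    le_mul_of_one_le_left (ha n) (le_add_of_nonneg_left n.cast_nonneg)
  have hrem : Tendsto (fun N : ℕ => (N : ℝ) * ∑' k, a (N + k)) atTop (𝓝 0) := by
    refine squeeze_zero (fun N => mul_nonneg N.cast_nonneg (tsum_nonneg fun k => ha _))
      (fun N => ?_) (tendsto_sum_nat_add fun n : ℕ => ((n : ℝ) + 1) * a n)
    rw [← tsum_mul_left]
    refine ((hsum.comp_add_left N).mul_left _).tsum_le_tsum (fun k => ?_)
      ((summable_nat_add_iff N).mpr h)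
    rw [add_comm k N]
    gcongr
    · exact ha _
    · push_cast
      linarith [k.cast_nonneg (α := ℝ)]
  rw [hasSum_iff_tendsto_nat_of_nonneg (fun i => tsum_nonneg fun k => ha _)]
  simpa only [sum_range_tsum_add_left hsum, add_zero] using
    h.hasSum.tendsto_sum_nat.add hrem

/-- Adjusted-times setup (Lemma 8.2): with `R i = T i - δ·T (i-1) - c` for `i ≥ 1`,
assuming `∑ i·|R i| < ∞`, the adjusted sequence `T̃` defined by
`T̃ 0 = T 0 + ∑_{j≥1} R j / δ^j` and `T̃ i = δ·T̃ (i-1) + c` satisfies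
`|T i - T̃ i| ≤ ∑_{j>i} |R j|`, the series `∑ |T i - T̃ i|` converges and is
bounded by `∑ i·|R i|`, and in particular `T i - T̃ i → 0`. -/
theorem stmt_11
    (δ c : ℝ) (hδ : δ > 1) (T : ℕ → ℝ)
    (hR : Summable (fun i : ℕ => ((i:ℝ)+1) * |T (i+1) - δ * T i - c|))
    (Ttil : ℕ → ℝ)
    (hTtil0 : Ttil 0 = T 0 + ∑' j : ℕ, (T (j+1) - δ * T j - c) / δ^(j+1))
    (hTtilrec : ∀ i : ℕ, Ttil (i+1) = δ * Ttil i + c) :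
    (∀ i : ℕ, |T i - Ttil i| ≤ ∑' k : ℕ, |T (i+k+1) - δ * T (i+k) - c|) ∧
    Summable (fun i : ℕ => |T i - Ttil i|) ∧
    (∑' i : ℕ, |T i - Ttil i|) ≤ ∑' i : ℕ, ((i:ℝ)+1) * |T (i+1) - δ * T i - c| ∧
    Tendsto (fun i => T i - Ttil i) atTop (𝓝 0) := by
  set R : ℕ → ℝ := fun j => T (j + 1) - δ * T j - c
  have hRabs : Summable fun j => |R j| := hR.of_nonneg_of_le (fun _ => abs_nonneg _) fun n =>
    le_mul_of_one_le_left (abs_nonneg _) (le_add_of_nonneg_left n.cast_nonneg)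
  have hdefect : ∀ i, T i - Ttil i = -∑' k, R (i + k) / δ ^ (k + 1) := by
    refine eq_neg_tsum_div_pow_of_succ_eq (by linarith) ?_ (by rw [hTtil0]; ring) fun i => ?_
    · exact hRabs.of_norm_bounded fun k => abs_div_pow_le hδ.le _ _
    · rw [hTtilrec]
      ring
  have hbound : ∀ i, |T i - Ttil i| ≤ ∑' k, |R (i + k)| := fun i => by
    rw [hdefect, abs_neg]
    exact abs_tsum_div_pow_le hδ.le (hRabs.comp_add_left i)
  have htails := hasSum_tsum_add_left (fun n => abs_nonneg (R n)) hR
  have hsummable : Summable fun i => |T i - Ttil i| :=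
    htails.summable.of_nonneg_of_le (fun _ => abs_nonneg _) hbound
  exact ⟨hbound, hsummable, (hsummable.tsum_le_tsum hbound htails.summable).trans_eq
    htails.tsum_eq, hsummable.of_abs.tendsto_atTop_zero⟩
end

section
/- In the adjusted-times setup below, assume that ∑_{i=1}^∞ |R_i| < ∞, and let T̃₀ := T₀ + ∑_{j=1}^∞ R_j/δ^j. Then for every N ≥ 0 the shifted limit lim_{i→∞} (T_{i+N} − ((δ^i − 1)/(δ − 1))·c)/δ^i exists and equals δ^N·T̃₀ + ((δ^N − 1)/(δ − 1))·c, i.e. it equals T̃_N, the N-th term of the sequence defined by T̃_i = δ·T̃_{i−1} + c. (Lemma 8.4: the construction of the adjusted times does not depend on where along the orbit one starts.) -/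
open Real Filter Topology

/-!
Dividing `T i - ((δ^i - 1)/(δ - 1))·c` by `δ^i` telescopes: the result is
`T 0 + ∑_{j<i} R j / δ^(j+1)`, which converges to `T̃₀` because `|R j / δ^(j+1)| ≤ |R j|`.
The shifted quotient is an affine function of the unshifted one at index `i + N`,
namely `δ^N · S (i+N) + ((δ^N - 1)/(δ - 1))·c`, so its limit is the same affine image of `T̃₀`.
-/

/-- `((δ^i - 1)/(δ - 1))·c` is the `i`-th iterate of `x ↦ δ x + c` at `0`. -/
noncomputable def normalizedTime (δ c : ℝ) (T : ℕ → ℝ) (i : ℕ) : ℝ :=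
  (T i - ((δ ^ i - 1) / (δ - 1)) * c) / δ ^ i

section

variable {δ : ℝ} (c : ℝ) (T : ℕ → ℝ)

theorem normalizedTime_eq_add_sum (hδ0 : δ ≠ 0) (hδ1 : δ ≠ 1) (i : ℕ) :
    normalizedTime δ c T i = T 0 + ∑ j ∈ Finset.range i, (T (j+1) - δ * T j - c) / δ ^ (j+1) := by
  have hδ1' : δ - 1 ≠ 0 := sub_ne_zero.mpr hδ1
  induction i with
  | zero => simp [normalizedTime]
  | succ n ih =>
    rw [Finset.sum_range_succ, ← add_assoc, ← ih]
    simp only [normalizedTime]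
    field_simp
    ring

theorem normalizedTime_shift (hδ0 : δ ≠ 0) (hδ1 : δ ≠ 1) (N i : ℕ) :
    (T (i+N) - ((δ ^ i - 1) / (δ - 1)) * c) / δ ^ i
      = δ ^ N * normalizedTime δ c T (i+N) + ((δ ^ N - 1) / (δ - 1)) * c := by
  have hδ1' : δ - 1 ≠ 0 := sub_ne_zero.mpr hδ1
  simp only [normalizedTime, pow_add]
  field_simp
  ring

end

theorem summable_div_pow_succ_of_summable_abs {δ : ℝ} (hδ : 1 ≤ δ) {R : ℕ → ℝ}
    (hR : Summable (fun j => |R j|)) : Summable (fun j => R j / δ ^ (j+1)) := by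
  refine Summable.of_norm_bounded hR fun j => ?_
  rw [norm_div, Real.norm_eq_abs, Real.norm_eq_abs, abs_of_pos (pow_pos (zero_lt_one.trans_le hδ) _)]
  exact div_le_self (abs_nonneg _) (one_le_pow₀ hδ)

theorem tendsto_normalizedTime {δ : ℝ} (c : ℝ) (hδ : 1 < δ) (T : ℕ → ℝ)
    (hR : Summable (fun i : ℕ => |T (i+1) - δ * T i - c|)) :
    Tendsto (normalizedTime δ c T) atTop
      (𝓝 (T 0 + ∑' j : ℕ, (T (j+1) - δ * T j - c) / δ ^ (j+1))) := by
  have hsum := (summable_div_pow_succ_of_summable_abs hδ.le hR).hasSum.tendsto_sum_nat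
  refine (tendsto_const_nhds.add hsum).congr fun i => ?_
  exact (normalizedTime_eq_add_sum c T (by positivity) hδ.ne' i).symm

/-- Lemma 8.4: the construction of the adjusted times does not depend on where
along the orbit one starts. With `R i = T i - δ·T (i-1) - c` summable and
`T̃₀ = T 0 + ∑_{j≥1} R j / δ^j`, for every `N ≥ 0` the shifted limit
`lim_i (T (i+N) - ((δ^i-1)/(δ-1))·c)/δ^i` exists and equals
`δ^N·T̃₀ + ((δ^N-1)/(δ-1))·c`, i.e. the `N`-th term of the sequence
`T̃ i = δ·T̃ (i-1) + c`. -/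
theorem stmt_12
    (δ c : ℝ) (hδ : δ > 1) (T : ℕ → ℝ)
    (hR : Summable (fun i : ℕ => |T (i+1) - δ * T i - c|)) :
    ∀ N : ℕ,
      Tendsto (fun i : ℕ => (T (i+N) - ((δ^i - 1)/(δ - 1)) * c) / δ^i) atTop
        (𝓝 (δ^N * (T 0 + ∑' j : ℕ, (T (j+1) - δ * T j - c) / δ^(j+1))
              + ((δ^N - 1)/(δ - 1)) * c)) := by
  intro N
  have hlim := tendsto_normalizedTime c hδ T hR
  have hshift :=
    ((hlim.comp (tendsto_add_atTop_nat N)).const_mul (δ ^ N)).add_const (((δ ^ N - 1) / (δ - 1)) * c)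
  exact hshift.congr fun i => (normalizedTime_shift c T (by positivity) hδ.ne' N i).symm
end
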